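/- arXiv:1905.08202 — 11 statements merged into one kernel-verified Lean document; each statement's English description precedes it below -/
import Mathlib

section
/- Let X be a linear order and let n, m be natural numbers. If f : X → ℕ is a based function with f(x) < n for all x ∈ X, and g : X → ℕ is a based function with g(x) < m for all x ∈ X, then the function h : X → ℕ defined by h(x) = m·f(x) + g(x) is based and satisfies h(x) < n·m for all x ∈ X. -/
/-!
Write `h = m * f + g`. Since `g < m`, the fiber of `h` over `k` is the intersection of the
fibers of `f` over `k / m` and of `g` over `k % m`. Fibers of antitone maps are order-convex,
and in a linear order a nonempty intersection of two order-convex sets, each having a least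
element or being a lower set, again has a least element (the larger of the two least elements,
or the one least element there is) or is a lower set.
-/

/-- A function `f : X → ℕ` on a linear order `X` is *based* if it is antitone and
every nonempty fiber `f ⁻¹' {n}` either has a least element or is downward closed
(an initial segment of `X`). -/
def Based {X : Type*} [LinearOrder X] (f : X → ℕ) : Prop :=
  Antitone f ∧ ∀ n : ℕ, (f ⁻¹' {n}).Nonempty →
    (∃ b, IsLeast (f ⁻¹' {n}) b) ∨ ∀ x ∈ f ⁻¹' {n}, ∀ y ≤ x, y ∈ f ⁻¹' {n}

open Set

section LinearOrder

variable {X : Type*} [LinearOrder X] {s t : Set X} {a b : X}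

theorem based_iff {f : X → ℕ} :
    Based f ↔ Antitone f ∧ ∀ n : ℕ, (f ⁻¹' {n}).Nonempty →
      (∃ b, IsLeast (f ⁻¹' {n}) b) ∨ IsLowerSet (f ⁻¹' {n}) := by
  simp only [Based, IsLowerSet]
  exact and_congr_right fun _ => forall_congr' fun _ => imp_congr_right fun _ =>
    or_congr_right ⟨fun h _ _ hyx hx => h _ hx _ hyx, fun h _ hx _ hyx => h hyx hx⟩

theorem IsLeast.inter_max (ha : IsLeast s a) (hb : IsLeast t b) (hs : s.OrdConnected)
    (ht : t.OrdConnected) (hst : (s ∩ t).Nonempty) : IsLeast (s ∩ t) (max a b) := by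
  obtain ⟨x, hxs, hxt⟩ := hst
  have hax := ha.2 hxs
  have hbx := hb.2 hxt
  refine ⟨⟨hs.out ha.1 hxs ⟨le_max_left a b, max_le hax hbx⟩,
    ht.out hb.1 hxt ⟨le_max_right a b, max_le hax hbx⟩⟩, fun y hy => ?_⟩
  exact max_le (ha.2 hy.1) (hb.2 hy.2)

theorem IsLeast.inter_of_isLowerSet (ha : IsLeast s a) (ht : IsLowerSet t)
    (hst : (s ∩ t).Nonempty) : IsLeast (s ∩ t) a := by
  obtain ⟨x, hxs, hxt⟩ := hst
  exact ⟨⟨ha.1, ht (ha.2 hxs) hxt⟩, fun y hy => ha.2 hy.1⟩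

theorem exists_isLeast_or_isLowerSet_inter (hs : s.OrdConnected) (ht : t.OrdConnected)
    (hst : (s ∩ t).Nonempty) (hs' : (∃ a, IsLeast s a) ∨ IsLowerSet s)
    (ht' : (∃ b, IsLeast t b) ∨ IsLowerSet t) :
    (∃ c, IsLeast (s ∩ t) c) ∨ IsLowerSet (s ∩ t) := by
  rcases hs' with ⟨a, ha⟩ | hs_lower <;> rcases ht' with ⟨b, hb⟩ | ht_lower
  · exact .inl ⟨_, ha.inter_max hb hs ht hst⟩
  · exact .inl ⟨a, ha.inter_of_isLowerSet ht_lower hst⟩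
  · exact .inl ⟨b, inter_comm s t ▸ hb.inter_of_isLowerSet hs_lower (inter_comm s t ▸ hst)⟩
  · exact .inr (hs_lower.inter ht_lower)

end LinearOrder

theorem preimage_mul_add_eq_inter {X : Type*} {m : ℕ} {f g : X → ℕ} (hg : ∀ x, g x < m)
    (k : ℕ) :
    (fun x => m * f x + g x) ⁻¹' {k} = f ⁻¹' {k / m} ∩ g ⁻¹' {k % m} := by
  ext x
  have hm : 0 < m := (Nat.zero_le _).trans_lt (hg x)
  simp only [mem_preimage, mem_singleton_iff, mem_inter_iff, eq_comm (b := k / m),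
    eq_comm (b := k % m), Nat.div_mod_unique hm, hg x, and_true, add_comm (g x)]

theorem based_mul_add_based {X : Type*} [LinearOrder X] (n m : ℕ) (f g : X → ℕ)
    (hf : Based f) (hfn : ∀ x, f x < n) (hg : Based g) (hgm : ∀ x, g x < m) :
    Based (fun x => m * f x + g x) ∧ ∀ x, m * f x + g x < n * m := by
  rw [based_iff] at hf hg ⊢
  refine ⟨⟨(hf.1.const_mul' m).add hg.1, fun k hk => ?_⟩,
    fun x => Nat.mul_add_lt_mul_of_lt_of_lt (hfn x) (hgm x)⟩
  rw [preimage_mul_add_eq_inter hgm] at hk ⊢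
  exact exists_isLeast_or_isLowerSet_inter
    (ordConnected_singleton.preimage_anti hf.1) (ordConnected_singleton.preimage_anti hg.1) hk
    (hf.2 _ (hk.mono inter_subset_left)) (hg.2 _ (hk.mono inter_subset_right))
end

section
/- Let X be a linear order, let f, g : X → ℕ be antitone functions with g(x) < m for all x ∈ X, and set h(x) = m·f(x) + g(x). Let i = m·j + k with k < m. If the fiber h⁻¹({i}) is nonempty, b_f is the least element of f⁻¹({j}), and b_g is the least element of g⁻¹({k}), then max(b_f, b_g) is the least element of h⁻¹({i}). -/
/-! Since `g < m`, the value `m * f x + g x` determines `f x` and `g x` as quotient and remainder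
by `m`, so the fiber of `h` at `m * j + k` is the intersection of the fibers of `f` at `j` and of
`g` at `k`. Fibers of antitone maps are order-convex, and the least element of a nonempty
intersection of two order-convex sets with least elements is the larger of the two. -/

theorem Nat.mul_add_eq_mul_add_iff {m a b c d : ℕ} (hb : b < m) (hd : d < m) :
    m * a + b = m * c + d ↔ a = c ∧ b = d := by
  refine ⟨fun h => ?_, fun ⟨hac, hbd⟩ => hac ▸ hbd ▸ rfl⟩
  have hm : 0 < m := b.zero_le.trans_lt hb
  obtain ⟨hqa, hrb⟩ := (Nat.div_mod_unique (a := m * a + b) hm).2 ⟨add_comm b _, hb⟩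
  obtain ⟨hqc, hrd⟩ := (Nat.div_mod_unique (a := m * a + b) hm).2 ⟨(add_comm d _).trans h.symm, hd⟩
  exact ⟨hqa.symm.trans hqc, hrb.symm.trans hrd⟩

theorem IsLeast.max_of_ordConnected {X : Type*} [LinearOrder X] {s t : Set X} {a b : X}
    (hs : s.OrdConnected) (ht : t.OrdConnected) (hst : (s ∩ t).Nonempty)
    (ha : IsLeast s a) (hb : IsLeast t b) : IsLeast (s ∩ t) (max a b) := by
  obtain ⟨x, hxs, hxt⟩ := hst
  have hx : max a b ≤ x := max_le (ha.2 hxs) (hb.2 hxt)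
  refine ⟨⟨hs.out ha.1 hxs ⟨le_max_left a b, hx⟩, ht.out hb.1 hxt ⟨le_max_right a b, hx⟩⟩, ?_⟩
  rintro y ⟨hys, hyt⟩
  exact max_le (ha.2 hys) (hb.2 hyt)

theorem isLeast_fiber_mul_add {X : Type*} [LinearOrder X] (m j k i : ℕ) (f g : X → ℕ)
    (hf : Antitone f) (hg : Antitone g) (hgm : ∀ x, g x < m)
    (hk : k < m) (hi : i = m * j + k)
    (hne : ((fun x => m * f x + g x) ⁻¹' {i}).Nonempty)
    (bf bg : X) (hbf : IsLeast (f ⁻¹' {j}) bf) (hbg : IsLeast (g ⁻¹' {k}) bg) :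
    IsLeast ((fun x => m * f x + g x) ⁻¹' {i}) (max bf bg) := by
  have hfiber : (fun x => m * f x + g x) ⁻¹' {i} = f ⁻¹' {j} ∩ g ⁻¹' {k} := by
    ext x
    simp only [Set.mem_preimage, Set.mem_singleton_iff, Set.mem_inter_iff, hi]
    exact Nat.mul_add_eq_mul_add_iff (hgm x) hk
  rw [hfiber] at hne ⊢
  exact hbf.max_of_ordConnected (Set.ordConnected_singleton.preimage_anti hf)
    (Set.ordConnected_singleton.preimage_anti hg) hne hbg
end

section
/- Let X be a type, m ∈ ℕ, and f, f', g, g' : X → ℕ with g(x) < m and g'(x) < m for all x ∈ X. If m·f(x) + g(x) = m·f'(x) + g'(x) for all x ∈ X, then f = f' and g = g'. Consequently, for a linear order X and n, m ∈ ℕ, the map (f, g) ↦ (x ↦ m·f(x) + g(x)) is an injection from A_n × A_m into A_{n·m}, where A_k denotes the set of based functions X → ℕ with all values < k. -/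
/-!
Writing `k = m * a + b` with `b < m` is division with remainder, so `(a, b)` is determined by `k`.
Hence each fiber of `m * f + g` is the intersection of a fiber of `f` with a fiber of `g`. Fibers
of antitone maps are order-connected, and a nonempty intersection of two order-connected sets,
each having a least element or being a lower set, again has a least element or is a lower set.
-/

theorem Nat.eq_and_eq_of_mul_add_eq_mul_add {m a b a' b' : ℕ} (hb : b < m) (hb' : b' < m)
    (h : m * a + b = m * a' + b') : a = a' ∧ b = b' := by
  have hbb' : b = b' := by
    simpa [Nat.mod_eq_of_lt hb, Nat.mod_eq_of_lt hb'] using congrArg (· % m) h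
  subst hbb'
  exact ⟨Nat.eq_of_mul_eq_mul_left (pos_of_gt hb) (Nat.add_right_cancel h), rfl⟩

theorem eq_and_eq_of_mul_add_eq_mul_add {X : Type*} {m : ℕ} {f f' g g' : X → ℕ}
    (hg : ∀ x, g x < m) (hg' : ∀ x, g' x < m) (h : ∀ x, m * f x + g x = m * f' x + g' x) :
    f = f' ∧ g = g' :=
  ⟨funext fun x => (Nat.eq_and_eq_of_mul_add_eq_mul_add (hg x) (hg' x) (h x)).1,
    funext fun x => (Nat.eq_and_eq_of_mul_add_eq_mul_add (hg x) (hg' x) (h x)).2⟩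

theorem Set.OrdConnected.inter_isLeast_or_isLowerSet {X : Type*} [LinearOrder X] {S T : Set X}
    (hS : S.OrdConnected) (hT : T.OrdConnected)
    (hS' : (∃ a, IsLeast S a) ∨ IsLowerSet S) (hT' : (∃ b, IsLeast T b) ∨ IsLowerSet T)
    (hST : (S ∩ T).Nonempty) : (∃ c, IsLeast (S ∩ T) c) ∨ IsLowerSet (S ∩ T) := by
  obtain ⟨s, hsS, hsT⟩ := hST
  rcases hS' with ⟨a, ha⟩ | hSlow <;> rcases hT' with ⟨b, hb⟩ | hTlow
  · refine .inl ⟨max a b, ⟨?_, ?_⟩, fun x hx => max_le (ha.2 hx.1) (hb.2 hx.2)⟩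
    · exact hS.out ha.1 hsS ⟨le_max_left a b, max_le (ha.2 hsS) (hb.2 hsT)⟩
    · exact hT.out hb.1 hsT ⟨le_max_right a b, max_le (ha.2 hsS) (hb.2 hsT)⟩
  · exact .inl ⟨a, ⟨ha.1, hTlow (ha.2 hsS) hsT⟩, fun x hx => ha.2 hx.1⟩
  · exact .inl ⟨b, ⟨hSlow (hb.2 hsT) hsS, hb.1⟩, fun x hx => hb.2 hx.2⟩
  · exact .inr (hSlow.inter hTlow)

theorem based_iff_isLowerSet {X : Type*} [LinearOrder X] {f : X → ℕ} :
    Based f ↔ Antitone f ∧ ∀ n : ℕ, (f ⁻¹' {n}).Nonempty →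
      (∃ b, IsLeast (f ⁻¹' {n}) b) ∨ IsLowerSet (f ⁻¹' {n}) := by
  simp only [Based, IsLowerSet]
  exact and_congr_right fun _ => forall₂_congr fun _ _ => or_congr_right
    ⟨fun h _ _ hyx hx => h _ hx _ hyx, fun h _ hx _ hyx => h hyx hx⟩

theorem preimage_mul_add_singleton {X : Type*} {m : ℕ} {f g : X → ℕ} (hg : ∀ x, g x < m)
    (s : X) :
    (fun x => m * f x + g x) ⁻¹' {m * f s + g s} = f ⁻¹' {f s} ∩ g ⁻¹' {g s} := by
  ext x
  simp only [Set.mem_preimage, Set.mem_singleton_iff, Set.mem_inter_iff]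
  exact ⟨Nat.eq_and_eq_of_mul_add_eq_mul_add (hg x) (hg s), fun ⟨hf, hg⟩ => hf ▸ hg ▸ rfl⟩

theorem Based.mul_add {X : Type*} [LinearOrder X] {m : ℕ} {f g : X → ℕ}
    (hf : Based f) (hg : Based g) (hgm : ∀ x, g x < m) :
    Based (fun x => m * f x + g x) := by
  rw [based_iff_isLowerSet] at hf hg ⊢
  refine ⟨fun x y hxy => Nat.add_le_add (Nat.mul_le_mul_left m (hf.1 hxy)) (hg.1 hxy), ?_⟩
  rintro _ ⟨s, rfl⟩
  rw [preimage_mul_add_singleton hgm]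
  exact Set.ordConnected_singleton.preimage_anti hf.1 |>.inter_isLeast_or_isLowerSet
    (Set.ordConnected_singleton.preimage_anti hg.1) (hf.2 _ ⟨s, rfl⟩) (hg.2 _ ⟨s, rfl⟩)
    ⟨s, rfl, rfl⟩

theorem mul_add_injective_and_based_injection :
    (∀ (X : Type*) (m : ℕ) (f f' g g' : X → ℕ),
      (∀ x, g x < m) → (∀ x, g' x < m) →
      (∀ x, m * f x + g x = m * f' x + g' x) → f = f' ∧ g = g') ∧
    (∀ (X : Type*) [LinearOrder X] (n m : ℕ),
      ∃ h : {f : X → ℕ // Based f ∧ ∀ x, f x < n} × {f : X → ℕ // Based f ∧ ∀ x, f x < m} →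
            {f : X → ℕ // Based f ∧ ∀ x, f x < n * m},
        Function.Injective h ∧
        ∀ p x, (h p).1 x = m * p.1.1 x + p.2.1 x) := by
  refine ⟨fun _ _ _ _ _ _ => eq_and_eq_of_mul_add_eq_mul_add, fun X _ n m => ?_⟩
  refine ⟨fun p => ⟨fun x => m * p.1.1 x + p.2.1 x, p.1.2.1.mul_add p.2.2.1 p.2.2.2,
    fun x => Nat.mul_add_lt_mul_of_lt_of_lt (p.1.2.2 x) (p.2.2.2 x)⟩, ?_, fun _ _ => rfl⟩
  intro p q hpq
  obtain ⟨h1, h2⟩ := eq_and_eq_of_mul_add_eq_mul_add p.2.2.2 q.2.2.2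
    (congrFun (congrArg Subtype.val hpq))
  exact Prod.ext (Subtype.ext h1) (Subtype.ext h2)
end

section
/- Let X be a linear order with no least element. Then the map sending b ∈ X to the function f_b : X → ℕ defined by f_b(x) = 1 if x < b and f_b(x) = 0 otherwise, is a bijection from X onto the set of nonconstant based functions f : X → ℕ with f(x) < 2 for all x. -/
/-!
The fiber of `f_b` over `1` is the initial segment `Iio b` and its fiber over `0` is `Ici b`,
with least element `b`. Conversely, if a nonconstant based `f` takes only the values `0` and `1`,
its fiber over `0` cannot be an initial segment, since points of value `1` lie below it; so it has
a least element `b`, and antitonicity forces `f = f_b`.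
-/

section

variable {X : Type*} [LinearOrder X]

theorem based_ite_lt (b : X) : Based (fun x : X => if x < b then 1 else 0) := by
  refine ⟨fun x y hxy => ?_, fun n ⟨x, hx⟩ => ?_⟩
  · by_cases hy : y < b
    · simp [hy, hxy.trans_lt hy]
    · simp [hy]
  · by_cases hxb : x < b
    · obtain rfl : n = 1 := by simpa [hxb] using hx.symm
      right
      intro z hz y hyz
      have hzb : z < b := by by_contra h; simp [h] at hz
      simp [hyz.trans_lt hzb]
    · obtain rfl : n = 0 := by simpa [hxb] using hx.symm
      exact Or.inl ⟨b, by simp, fun y hy => by by_contra h; simp [not_le.mp h] at hy⟩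

theorem injective_ite_lt :
    Function.Injective (fun b : X => fun x : X => if x < b then (1 : ℕ) else 0) := by
  intro a b h
  by_contra hne
  rcases lt_or_gt_of_ne hne with hab | hab
  · simpa [hab] using congrFun h a
  · simpa [hab] using congrFun h b

theorem Based.exists_isLeast_preimage {f : X → ℕ} (hf : Based f) {u v : X} (hu : f v < f u) :
    ∃ b, IsLeast (f ⁻¹' {f v}) b := by
  refine (hf.2 (f v) ⟨v, rfl⟩).resolve_right fun hdown => hu.ne' ?_
  exact hdown v rfl u (hf.1.reflect_lt hu).le

theorem eq_ite_lt_of_isLeast_preimage_zero {f : X → ℕ} (hf : Antitone f) (hf2 : ∀ x, f x < 2)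
    {b : X} (hb : IsLeast (f ⁻¹' {0}) b) : f = fun x => if x < b then 1 else 0 := by
  funext x
  split_ifs with hx
  · have : f x ≠ 0 := fun h => (hb.2 h).not_gt hx
    have := hf2 x
    omega
  · have := hf (not_lt.mp hx)
    have : f b = 0 := hb.1
    omega

end

theorem bijOn_nonconstant_based_lt_two {X : Type*} [LinearOrder X] [NoMinOrder X] :
    Set.BijOn (fun b : X => fun x : X => if x < b then 1 else 0) Set.univ
      {f : X → ℕ | Based f ∧ (∀ x, f x < 2) ∧ ∃ x y, f x ≠ f y} := by
  refine ⟨fun b _ => ⟨based_ite_lt b, fun x => ?_, ?_⟩, injective_ite_lt.injOn, ?_⟩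
  · dsimp only
    split_ifs <;> omega
  · obtain ⟨a, ha⟩ := exists_lt b
    exact ⟨a, b, by simp [ha]⟩
  · rintro f ⟨hf, hf2, x, y, hxy⟩
    obtain ⟨u, v, hu, hv⟩ : ∃ u v, f u = 1 ∧ f v = 0 := by
      have := hf2 x; have := hf2 y
      rcases Nat.lt_or_gt_of_ne hxy with h | h
      · exact ⟨y, x, by omega, by omega⟩
      · exact ⟨x, y, by omega, by omega⟩
    obtain ⟨b, hb⟩ := hf.exists_isLeast_preimage (show f v < f u by omega)
    rw [hv] at hb
    exact ⟨b, trivial, (eq_ite_lt_of_isLeast_preimage_zero hf.1 hf2 hb).symm⟩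
end

section
/- Let X be a linear order, m ∈ ℕ, and f : X → ℕ a based function with f(x) < m for all x. For any x ∈ X, if there exists a base point of f that is ≤ x, then the set of base points of f that are ≤ x has a greatest element b, and f(x) = f(b). -/
section BasePoint

variable {X : Type*} [LinearOrder X] {f : X → ℕ}

def IsBasePoint (f : X → ℕ) (b : X) : Prop :=
  IsLeast (f ⁻¹' {f b}) b

theorem IsBasePoint.eq_of_apply_eq {b c : X} (hb : IsBasePoint f b) (hc : IsBasePoint f c)
    (h : f b = f c) : b = c :=
  le_antisymm (hb.2 h.symm) (hc.2 h)

theorem IsBasePoint.le_of_apply_le (hf : Antitone f) {b c : X} (hb : IsBasePoint f b)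
    (hc : IsBasePoint f c) (h : f b ≤ f c) : c ≤ b := by
  rcases h.eq_or_lt with h | h
  · exact (hb.eq_of_apply_eq hc h).ge
  · exact (hf.reflect_lt h).le

theorem Based.exists_isBasePoint_le_apply_eq (hf : Based f) {x b : X} (hb : IsBasePoint f b)
    (hbx : b ≤ x) : ∃ c, IsBasePoint f c ∧ c ≤ x ∧ f c = f x := by
  rcases hf.2 (f x) ⟨x, rfl⟩ with ⟨c, hc⟩ | hdown
  · have hcx : f c = f x := hc.1
    exact ⟨c, by rwa [IsBasePoint, hcx], hc.2 rfl, hcx⟩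
  · exact ⟨b, hb, hbx, hdown x rfl b hbx⟩

end BasePoint

theorem greatest_basePoint_below_general {X : Type*} [LinearOrder X] (f : X → ℕ)
    (hf : Based f) (x : X)
    (hx : ∃ b, IsLeast (f ⁻¹' {f b}) b ∧ b ≤ x) :
    ∃ b, IsGreatest {c : X | IsLeast (f ⁻¹' {f c}) c ∧ c ≤ x} b ∧ f x = f b := by
  obtain ⟨b, hb, hbx⟩ := hx
  obtain ⟨c, hc, hcx, hfc⟩ := hf.exists_isBasePoint_le_apply_eq hb hbx
  refine ⟨c, ⟨⟨hc, hcx⟩, fun d ⟨hd, hdx⟩ => ?_⟩, hfc.symm⟩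
  exact hc.le_of_apply_le hf.1 hd (hfc ▸ hf.1 hdx)

theorem greatest_basePoint_below {X : Type*} [LinearOrder X] (m : ℕ) (f : X → ℕ)
    (hf : Based f) (hfm : ∀ x, f x < m) (x : X)
    (hx : ∃ b, IsLeast (f ⁻¹' {f b}) b ∧ b ≤ x) :
    ∃ b, IsGreatest {c : X | IsLeast (f ⁻¹' {f c}) c ∧ c ≤ x} b ∧ f x = f b :=
  greatest_basePoint_below_general f hf x hx
end

section
/- Let X be a linear order, m ∈ ℕ, and E ⊆ X a countable set. Then the set of based functions f : X → ℕ such that f(x) < m for all x and every base point of f belongs to E, is countable. -/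
section

variable {X : Type*} [LinearOrder X]

def fiberData (f : X → ℕ) (n : ℕ) : Set X × Prop :=
  ({b | IsLeast (f ⁻¹' {n}) b}, (f ⁻¹' {n}).Nonempty)

theorem Based.le_of_fiberData_eq {f g : X → ℕ} (hg : Based g) {x : X}
    (h : fiberData f (f x) = fiberData g (f x)) : g x ≤ f x := by
  simp only [fiberData, Prod.mk.injEq] at h
  obtain ⟨hleast, hnonempty⟩ := h
  by_cases hf : ∃ b, IsLeast (f ⁻¹' {f x}) b
  · obtain ⟨b, hb⟩ := hf
    have hgb : IsLeast (g ⁻¹' {f x}) b := (Set.ext_iff.mp hleast b).mp hb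
    exact (hg.1 (hb.2 rfl)).trans_eq hgb.1
  · have hgne : (g ⁻¹' {f x}).Nonempty := hnonempty.mp ⟨x, rfl⟩
    have hgleast : ¬∃ b, IsLeast (g ⁻¹' {f x}) b := fun ⟨b, hb⟩ =>
      hf ⟨b, (Set.ext_iff.mp hleast b).mpr hb⟩
    have hinitial := (hg.2 _ hgne).resolve_left hgleast
    obtain ⟨y, hy⟩ := hgne
    rcases le_total y x with hyx | hxy
    · exact (hg.1 hyx).trans_eq hy
    · exact (hinitial y hy x hxy).le

end

theorem countable_based_with_basePoints_in {X : Type*} [LinearOrder X] (m : ℕ)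
    (E : Set X) (hE : E.Countable) :
    {f : X → ℕ | Based f ∧ (∀ x, f x < m) ∧
      ∀ b : X, IsLeast (f ⁻¹' {f b}) b → b ∈ E}.Countable := by
  set φ : (X → ℕ) → (Fin m → Set X × Prop) := fun f n => fiberData f n
  have hcodes : {c : Fin m → Set X × Prop | ∀ n,
      c n ∈ {s : Set X | s.Finite ∧ s ⊆ E} ×ˢ (Set.univ : Set Prop)}.Countable :=
    Set.countable_pi fun _ => (Set.countable_ofPred_finite_subset hE).prod Set.countable_univ
  refine Set.MapsTo.countable_of_injOn (f := φ) ?_ ?_ hcodes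
  · rintro f ⟨-, -, hbase⟩ n
    refine ⟨⟨Set.Subsingleton.finite fun a ha b hb => IsLeast.unique ha hb, fun b hb => ?_⟩,
      trivial⟩
    exact hbase b ((show f b = n from hb.1) ▸ hb)
  · rintro f ⟨hf, hfm, -⟩ g ⟨hg, hgm, -⟩ hfg
    funext x
    exact le_antisymm (hf.le_of_fiberData_eq (congrFun hfg ⟨g x, hgm x⟩).symm)
      (hg.le_of_fiberData_eq (congrFun hfg ⟨f x, hfm x⟩))
end

section
/- Let X denote the lexicographic product ω₁ ×ₗ ℚ. For every x ∈ X, the initial segment Iio(x) = {y ∈ X | y < x}, with the order induced from X, is order-isomorphic to ℚ. In particular, any two such initial segments are order-isomorphic. -/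
/-!
Every initial segment of `ω₁ ×ₗ ℚ` is countable, since it lies in `Iic a ×ˢ ℚ` for a countable
ordinal `a`. It is densely ordered without endpoints, so Cantor's back-and-forth theorem
identifies it with `ℚ`.
-/

/-- The linearly ordered set `ω₁` of countable ordinals, realized as the canonical type
of order type `ω₁ = (ℵ₁).ord`. -/
abbrev OmegaOne : Type := (Cardinal.aleph 1).ord.ToType

/-- The lexicographic product `ω₁ ×ₗ ℚ`. -/
abbrev KrivineX : Type := OmegaOne ×ₗ ℚ

theorem Set.nonempty_Iio_orderIso_rat_of_countable {α : Type*} [LinearOrder α] [DenselyOrdered α]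
    [NoMinOrder α] {x : α} (h : (Set.Iio x).Countable) : Nonempty (Set.Iio x ≃o ℚ) :=
  have := h.to_subtype
  Order.iso_of_countable_dense _ _

theorem Prod.Lex.countable_Iio {α β : Type*} [LinearOrder α] [Preorder β] [Countable β]
    {x : α ×ₗ β} (h : (Set.Iic (ofLex x).1).Countable) : (Set.Iio x).Countable :=
  ((h.prod Set.countable_univ).preimage ofLex.injective).mono
    fun y hy => Set.mem_prod.2 ⟨Prod.Lex.monotone_fst y x hy.le, Set.mem_univ _⟩

theorem OmegaOne.countable_Iic (a : OmegaOne) : (Set.Iic a).Countable := by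
  have : Cardinal.mk (Set.Iio a) < Cardinal.aleph 1 := by
    simpa using Cardinal.mk_Iio_lt a (by simp)
  rw [← Set.Iio_insert]
  exact (Cardinal.le_aleph0_iff_set_countable.1 (Cardinal.lt_aleph_one_iff.1 this)).insert a

theorem iio_orderIso_rat :
    (∀ x : KrivineX, Nonempty (↥(Set.Iio x) ≃o ℚ)) ∧
    ∀ x y : KrivineX, Nonempty (↥(Set.Iio x) ≃o ↥(Set.Iio y)) := by
  have iso_rat (x : KrivineX) : Nonempty (Set.Iio x ≃o ℚ) :=
    Set.nonempty_Iio_orderIso_rat_of_countable (Prod.Lex.countable_Iio (OmegaOne.countable_Iic _))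
  refine ⟨iso_rat, fun x y => ?_⟩
  obtain ⟨f⟩ := iso_rat x
  obtain ⟨g⟩ := iso_rat y
  exact ⟨f.trans g.symm⟩
end

section
/- Let X denote the lexicographic product ω₁ ×ₗ ℚ. For all a, b ∈ X with a < b, the open interval Ioo(a, b) = {y ∈ X | a < y < b}, with the order induced from X, is order-isomorphic to ℚ. -/
/-!
By Cantor's back-and-forth theorem it suffices that `Ioo a b` is countable, dense, nonempty and
without endpoints; all but countability are inherited from the dense order `ω₁ ×ₗ ℚ`.
It is countable because every point below `b` has first coordinate in the countable initial
segment `Iic (ofLex b).1` of `ω₁`, and there are only countably many second coordinates.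
-/

open Set Cardinal

theorem Prod.Lex.countable_Iic {α β : Type*} [Preorder α] [Preorder β] [Countable β]
    {b : α ×ₗ β} (hb : (Iic (ofLex b).1).Countable) : (Iic b).Countable := by
  refine ((hb.prod countable_univ).image toLex).mono fun y hy ↦ ?_
  exact ⟨ofLex y, ⟨Prod.Lex.monotone_fst_ofLex hy, mem_univ _⟩, rfl⟩

theorem countable_Iic_ord_aleph_one (x : (ℵ₁).ord.ToType) : (Iic x).Countable := by
  rw [← Iio_insert]
  exact (le_aleph0_iff_set_countable.1 (by simpa using mk_Iio_lt x)).insert x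

theorem ioo_orderIso_rat (a b : KrivineX) (hab : a < b) :
    Nonempty (↥(Set.Ioo a b) ≃o ℚ) := by
  have : Countable (Ioo a b) :=
    ((Prod.Lex.countable_Iic (countable_Iic_ord_aleph_one _)).mono
      (Ioo_subset_Iio_self.trans Iio_subset_Iic_self)).to_subtype
  have : Nonempty (Ioo a b) := nonempty_Ioo_subtype hab
  exact Order.iso_of_countable_dense _ _
end

section
/- Let X denote the lexicographic product ω₁ ×ₗ ℚ. For all a, x, b ∈ X with a < x < b, there exists an order isomorphism π : X ≃o X such that π(x) ≠ x and π(y) = y for every y not in the open interval Ioo(a, b). -/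
open Set

section ExtendByIdentity

variable {α : Type*} [LinearOrder α] {a b : α}

theorem strictMono_ofSubtype_Ioo (φ : Ioo a b ≃o Ioo a b) :
    StrictMono (Equiv.Perm.ofSubtype φ.toEquiv) := by
  intro y z hyz
  by_cases hy : y ∈ Ioo a b <;> by_cases hz : z ∈ Ioo a b
  · simp only [Equiv.Perm.ofSubtype_apply_of_mem _ hy, Equiv.Perm.ofSubtype_apply_of_mem _ hz,
      OrderIso.coe_toEquiv, Subtype.coe_lt_coe, φ.lt_iff_lt]
    exact hyz
  · have hbz : b ≤ z := not_lt.1 fun h => hz ⟨hy.1.trans hyz, h⟩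
    rw [Equiv.Perm.ofSubtype_apply_of_mem _ hy, Equiv.Perm.ofSubtype_apply_of_not_mem _ hz]
    exact (φ ⟨y, hy⟩).2.2.trans_le hbz
  · have hya : y ≤ a := not_lt.1 fun h => hy ⟨h, hyz.trans hz.2⟩
    rw [Equiv.Perm.ofSubtype_apply_of_not_mem _ hy, Equiv.Perm.ofSubtype_apply_of_mem _ hz]
    exact hya.trans_lt (φ ⟨z, hz⟩).2.1
  · rwa [Equiv.Perm.ofSubtype_apply_of_not_mem _ hy, Equiv.Perm.ofSubtype_apply_of_not_mem _ hz]

theorem exists_orderIso_extend_Ioo (φ : Ioo a b ≃o Ioo a b) :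
    ∃ π : α ≃o α, (∀ y : Ioo a b, π y = φ y) ∧ ∀ y ∉ Ioo a b, π y = y :=
  ⟨(strictMono_ofSubtype_Ioo φ).orderIsoOfSurjective _ (Equiv.surjective _),
    fun y => Equiv.Perm.ofSubtype_apply_of_mem _ y.2,
    fun _ hy => Equiv.Perm.ofSubtype_apply_of_not_mem _ hy⟩

theorem exists_orderIso_ne_of_countable_Ioo [DenselyOrdered α] {x : α} (hx : x ∈ Ioo a b)
    (hc : (Ioo a b).Countable) :
    ∃ π : α ≃o α, π x ≠ x ∧ ∀ y ∉ Ioo a b, π y = y := by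
  have : Countable (Ioo a b) := hc.to_subtype
  have : Nonempty (Ioo a b) := ⟨⟨x, hx⟩⟩
  obtain ⟨e⟩ := Order.iso_of_countable_dense (Ioo a b) ℚ
  let φ : Ioo a b ≃o Ioo a b := e.trans ((OrderIso.addRight 1).trans e.symm)
  obtain ⟨π, hπφ, hπ⟩ := exists_orderIso_extend_Ioo φ
  refine ⟨π, fun h => ?_, hπ⟩
  have h' : e (φ ⟨x, hx⟩) = e ⟨x, hx⟩ := congrArg e (Subtype.ext ((hπφ ⟨x, hx⟩).symm.trans h))
  simp [φ] at h'

end ExtendByIdentity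

namespace Prod.Lex

variable {α β : Type*}

theorem Ioo_toLex_subset_range [PartialOrder α] [Preorder β] (i : α) (p q : β) :
    Ioo (toLex (i, p)) (toLex (i, q)) ⊆ range fun t => toLex (i, t) := by
  intro y ⟨hpy, hyq⟩
  have hi : (ofLex y).1 = i := by
    rcases Prod.Lex.lt_iff.1 hpy with h | ⟨h, -⟩ <;>
      rcases Prod.Lex.lt_iff.1 hyq with h' | ⟨h', -⟩
    · exact absurd (h.trans h') (lt_irrefl i)
    · exact absurd h (h' ▸ lt_irrefl _)
    · exact h.symm
    · exact h'
  exact ⟨(ofLex y).2, by rw [← hi]; rfl⟩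

theorem exists_le_toLex_lt [LT α] [Preorder β] [NoMinOrder β] {a x : α ×ₗ β} (h : a < x) :
    ∃ p, a ≤ toLex ((ofLex x).1, p) ∧ toLex ((ofLex x).1, p) < x := by
  rcases Prod.Lex.lt_iff.1 h with h1 | ⟨h1, h2⟩
  · obtain ⟨p, hp⟩ := exists_lt (ofLex x).2
    exact ⟨p, Prod.Lex.le_iff.2 (Or.inl h1), Prod.Lex.lt_iff.2 (Or.inr ⟨rfl, hp⟩)⟩
  · exact ⟨(ofLex a).2, Prod.Lex.le_iff.2 (Or.inr ⟨h1, le_rfl⟩),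
      Prod.Lex.lt_iff.2 (Or.inr ⟨rfl, h2⟩)⟩

theorem exists_lt_toLex_le [LT α] [Preorder β] [NoMaxOrder β] {x b : α ×ₗ β} (h : x < b) :
    ∃ q, x < toLex ((ofLex x).1, q) ∧ toLex ((ofLex x).1, q) ≤ b := by
  rcases Prod.Lex.lt_iff.1 h with h1 | ⟨h1, h2⟩
  · obtain ⟨q, hq⟩ := exists_gt (ofLex x).2
    exact ⟨q, Prod.Lex.lt_iff.2 (Or.inr ⟨rfl, hq⟩), Prod.Lex.le_iff.2 (Or.inl h1)⟩
  · exact ⟨(ofLex b).2, Prod.Lex.lt_iff.2 (Or.inr ⟨rfl, h2⟩),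
      Prod.Lex.le_iff.2 (Or.inr ⟨h1, le_rfl⟩)⟩

end Prod.Lex

theorem orderAut_moving_in_interval (a x b : KrivineX) (hax : a < x) (hxb : x < b) :
    ∃ π : KrivineX ≃o KrivineX, π x ≠ x ∧ ∀ y ∉ Set.Ioo a b, π y = y := by
  obtain ⟨p, hap, hpx⟩ := Prod.Lex.exists_le_toLex_lt hax
  obtain ⟨q, hxq, hqb⟩ := Prod.Lex.exists_lt_toLex_le hxb
  have hc : (Ioo (toLex ((ofLex x).1, p)) (toLex ((ofLex x).1, q))).Countable :=
    (countable_range _).mono (Prod.Lex.Ioo_toLex_subset_range _ p q)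
  obtain ⟨π, hπx, hπ⟩ := exists_orderIso_ne_of_countable_Ioo ⟨hpx, hxq⟩ hc
  exact ⟨π, hπx, fun y hy => hπ y fun hy' => hy (Ioo_subset_Ioo hap hqb hy')⟩
end

section
/- Let X denote the lexicographic product ω₁ ×ₗ ℚ, and let E ⊆ X be a countable downward-closed set. Suppose x, y ∈ X ∖ E and neither x nor y is a least element of X ∖ E. Then there exists an order isomorphism π : X ≃o X such that π(x) = y and π(e) = e for every e ∈ E. -/
/-!
Let `U` be the set of points lying strictly above some point outside `E`; it is an upper set
disjoint from `E` containing `x` and `y`, so it suffices to find an automorphism of `U` sending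
`x` to `y` and extend it by the identity. Below `x` and `y`, `U` is countable (every initial
segment of `ω₁ ×ₗ ℚ` is), dense and without endpoints, so Cantor's back-and-forth theorem matches
the two parts. Above them, every ray of `ω₁ ×ₗ ℚ` is a ray of `ℚ` followed by a tail of `ω₁`
times `ℚ`, and all rays of `ℚ`, resp. all tails of the regular ordinal `ω₁`, are isomorphic.
-/

open Set

section Glue
variable {α β : Type*} [LinearOrder α] [LinearOrder β]

theorem exists_orderIso_apply_eq_of_Iio_of_Ioi {a : α} {b : β} (e₁ : Iio a ≃o Iio b)
    (e₂ : Ioi a ≃o Ioi b) : ∃ f : α ≃o β, f a = b := by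
  classical
  let f : α → β := fun z => if h : z < a then e₁ ⟨z, h⟩ else if h' : a < z then e₂ ⟨z, h'⟩ else b
  have f_lt (z : α) (h : z < a) : f z = e₁ ⟨z, h⟩ := dif_pos h
  have f_gt (z : α) (h : a < z) : f z = e₂ ⟨z, h⟩ := by simp [f, h, h.not_gt]
  have f_self : f a = b := by simp [f]
  have hf : StrictMono f := by
    intro z w hzw
    rcases lt_trichotomy z a with hz | rfl | hz
    · rcases lt_trichotomy w a with hw | rfl | hw
      · rw [f_lt z hz, f_lt w hw]
        exact e₁.strictMono hzw
      · rw [f_lt z hz, f_self]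
        exact (e₁ _).2
      · rw [f_lt z hz, f_gt w hw]
        exact (e₁ _).2.trans (e₂ _).2
    · rw [f_self, f_gt w hzw]
      exact (e₂ _).2
    · rw [f_gt z hz, f_gt w (hz.trans hzw)]
      exact e₂.strictMono hzw
  have hf' : Function.Surjective f := by
    intro w
    rcases lt_trichotomy w b with hw | rfl | hw
    · exact ⟨e₁.symm ⟨w, hw⟩, by simp [f_lt _ (e₁.symm _).2]⟩
    · exact ⟨a, f_self⟩
    · exact ⟨e₂.symm ⟨w, hw⟩, by simp [f_gt _ (e₂.symm _).2]⟩
  exact ⟨hf.orderIsoOfSurjective f hf', f_self⟩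

theorem IsUpperSet.exists_orderIso_extend {U : Set α} (hU : IsUpperSet U) (φ : U ≃o U) :
    ∃ π : α ≃o α, (∀ u : U, π u = φ u) ∧ ∀ z ∉ U, π z = z := by
  classical
  let f : α → α := fun z => if h : z ∈ U then φ ⟨z, h⟩ else z
  have f_mem (z : α) (h : z ∈ U) : f z = φ ⟨z, h⟩ := dif_pos h
  have f_notMem (z : α) (h : z ∉ U) : f z = z := dif_neg h
  have hf : StrictMono f := by
    intro z w hzw
    by_cases hz : z ∈ U
    · rw [f_mem z hz, f_mem w (hU hzw.le hz)]
      exact φ.strictMono hzw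
    · rw [f_notMem z hz]
      by_cases hw : w ∈ U
      · rw [f_mem w hw]
        exact lt_of_not_ge fun h => hz (hU h (φ _).2)
      · rwa [f_notMem w hw]
  have hf' : Function.Surjective f := by
    intro w
    by_cases hw : w ∈ U
    · exact ⟨φ.symm ⟨w, hw⟩, by simp [f_mem _ (φ.symm _).2]⟩
    · exact ⟨w, f_notMem w hw⟩
  exact ⟨hf.orderIsoOfSurjective f hf', fun u => f_mem u u.2, f_notMem⟩

def IsUpperSet.ioiOrderIso {U : Set α} (hU : IsUpperSet U) (a : U) : Ioi a ≃o Ioi (a : α) where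
  toFun z := ⟨z.1, z.2⟩
  invFun z := ⟨⟨z.1, hU z.2.le a.2⟩, z.2⟩
  map_rel_iff' := Iff.rfl

end Glue

section Cantor
variable {α : Type*} [LinearOrder α] [DenselyOrdered α]

theorem nonempty_Ioi_orderIso_of_countable [Countable α] [NoMaxOrder α] (a b : α) :
    Nonempty (Ioi a ≃o Ioi b) :=
  Order.iso_of_countable_dense _ _

theorem nonempty_Iio_orderIso_of_countable [NoMinOrder α] {a b : α}
    (ha : (Iio a).Countable) (hb : (Iio b).Countable) : Nonempty (Iio a ≃o Iio b) := by
  have := ha.to_subtype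
  have := hb.to_subtype
  have : Nonempty (Iio a) := nonempty_Iio_subtype
  have : Nonempty (Iio b) := nonempty_Iio_subtype
  exact Order.iso_of_countable_dense _ _

end Cantor

section StrictUpperClosure
variable {α : Type*} [LinearOrder α]

def strictUpperClosure (s : Set α) : Set α := {z | ∃ w ∈ s, w < z}

theorem isUpperSet_strictUpperClosure (s : Set α) : IsUpperSet (strictUpperClosure s) :=
  fun _ _ hab ⟨w, hw, hwa⟩ => ⟨w, hw, hwa.trans_le hab⟩

instance [DenselyOrdered α] (s : Set α) : NoMinOrder (strictUpperClosure s) where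
  exists_lt := fun ⟨z, w, hw, hwz⟩ => by
    obtain ⟨c, hwc, hcz⟩ := exists_between hwz
    exact ⟨⟨c, w, hw, hwc⟩, hcz⟩

theorem mem_strictUpperClosure_of_not_isLeast {s : Set α} {x : α} (hx : x ∈ s)
    (h : ¬IsLeast s x) : x ∈ strictUpperClosure s := by
  simpa [IsLeast, hx, mem_lowerBounds, strictUpperClosure] using h

theorem IsLowerSet.notMem_strictUpperClosure_compl {E : Set α} (hE : IsLowerSet E) {e : α}
    (he : e ∈ E) : e ∉ strictUpperClosure Eᶜ :=
  fun ⟨_, hw, hwe⟩ => hw (hE hwe.le he)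

end StrictUpperClosure

namespace Prod.Lex
variable {α β : Type*} [LinearOrder α] [LinearOrder β]

instance denselyOrdered [DenselyOrdered β] [NoMaxOrder β] : DenselyOrdered (α ×ₗ β) where
  dense x y h := by
    rcases Prod.Lex.lt_iff.1 h with h | ⟨h, h'⟩
    · obtain ⟨b, hb⟩ := exists_gt (ofLex x).2
      exact ⟨toLex ((ofLex x).1, b), toLex_lt_toLex.2 (.inr ⟨rfl, hb⟩), toLex_lt_toLex.2 (.inl h)⟩
    · obtain ⟨b, hb, hb'⟩ := exists_between h'
      exact ⟨toLex ((ofLex x).1, b), toLex_lt_toLex.2 (.inr ⟨rfl, hb⟩),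
        toLex_lt_toLex.2 (.inr ⟨h, hb'⟩)⟩

theorem countable_Iio_s15 [Countable β] (h : ∀ a : α, (Iio a).Countable) (x : α ×ₗ β) :
    (Iio x).Countable := by
  have hsub : Iio x ⊆ toLex '' (Iic (ofLex x).1 ×ˢ univ) := fun z hz =>
    ⟨ofLex z, ⟨Prod.Lex.monotone_fst _ _ hz.le, trivial⟩, rfl⟩
  refine .mono hsub (.image (.prod ?_ countable_univ) _)
  rw [← Iio_insert]
  exact (h _).insert _

noncomputable def ioiOrderIso (a : α) (b : β) :
    Ioi (toLex (a, b)) ≃o Ioi b ⊕ₗ (Ioi a ×ₗ β) :=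
  let g : Ioi b ⊕ₗ (Ioi a ×ₗ β) → Ioi (toLex (a, b)) := fun s =>
    Sum.elim (fun c => ⟨toLex (a, c.1), toLex_lt_toLex.2 (.inr ⟨rfl, c.2⟩)⟩)
      (fun p => ⟨toLex ((ofLex p).1.1, (ofLex p).2), toLex_lt_toLex.2 (.inl (ofLex p).1.2)⟩)
      (ofLex s)
  have hg : StrictMono g := by
    simp only [StrictMono, Lex.forall, Sum.forall, g, ofLex_toLex, Sum.elim_inl, Sum.elim_inr,
      ← Subtype.coe_lt_coe, toLex_lt_toLex, Sum.Lex.inl_lt_inl_iff, Sum.Lex.inr_lt_inr_iff]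
    exact ⟨fun c => ⟨fun c' h => .inr ⟨trivial, h⟩, fun p _ => .inl p.1.2⟩,
      fun p => ⟨fun c h => absurd h Sum.Lex.not_inr_lt_inl,
        fun p' h => h.imp_right (And.imp_left (congrArg Subtype.val))⟩⟩
  have hg' : Function.Surjective g := by
    rintro ⟨z, hz⟩
    rcases Prod.Lex.lt_iff.1 hz with h | ⟨h, h'⟩
    · exact ⟨toLex (.inr (toLex (⟨(ofLex z).1, h⟩, (ofLex z).2))), rfl⟩
    · exact ⟨toLex (.inl ⟨(ofLex z).2, h'⟩), Subtype.ext (congrArg toLex (Prod.ext h rfl))⟩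
  (hg.orderIsoOfSurjective g hg').symm

theorem nonempty_Ioi_orderIso (hα : ∀ a a' : α, Nonempty (Ioi a ≃o Ioi a'))
    (hβ : ∀ b b' : β, Nonempty (Ioi b ≃o Ioi b')) (x y : α ×ₗ β) :
    Nonempty (Ioi x ≃o Ioi y) := by
  obtain ⟨eα⟩ := hα (ofLex x).1 (ofLex y).1
  obtain ⟨eβ⟩ := hβ (ofLex x).2 (ofLex y).2
  exact ⟨(ioiOrderIso _ _).trans
    ((eβ.sumLexCongr (prodLexCongr eα (.refl β))).trans (ioiOrderIso _ _).symm)⟩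

end Prod.Lex

namespace OmegaOne

instance : IsRegularCardinalOrder OmegaOne where
  type_lt_le_ord_cof := by
    rw [Ordinal.type_toType, Ordinal.cof_toType, Cardinal.isRegular_aleph_one.cof_ord]

instance : NoMaxOrder OmegaOne := Cardinal.noMaxOrder (Cardinal.aleph0_le_aleph 1)

theorem countable_Iio_s15 (a : OmegaOne) : (Iio a).Countable :=
  Cardinal.le_aleph0_iff_set_countable.1 <| Cardinal.lt_aleph_one_iff.1 <| by
    simpa using Cardinal.mk_Iio_lt a Cardinal.ord_cardinalMk

theorem nonempty_Ioi_orderIso (a b : OmegaOne) : Nonempty (Ioi a ≃o Ioi b) :=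
  ⟨(Order.enum _ (not_bddAbove_iff_isCofinal.1 (not_bddAbove_Ioi a))).symm.trans
    (Order.enum _ (not_bddAbove_iff_isCofinal.1 (not_bddAbove_Ioi b)))⟩

end OmegaOne

theorem orderAut_fixing_initial_segment_general (E : Set KrivineX)
    (hdc : ∀ y e : KrivineX, e ∈ E → y ≤ e → y ∈ E)
    (x y : KrivineX) (hx : x ∉ E) (hy : y ∉ E)
    (hxl : ¬ IsLeast Eᶜ x) (hyl : ¬ IsLeast Eᶜ y) :
    ∃ π : KrivineX ≃o KrivineX, π x = y ∧ ∀ e ∈ E, π e = e := by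
  have hE : IsLowerSet E := fun a b hba ha => hdc b a ha hba
  set U := strictUpperClosure Eᶜ
  have hU : IsUpperSet U := isUpperSet_strictUpperClosure _
  have := hU.ordConnected
  let x' : U := ⟨x, mem_strictUpperClosure_of_not_isLeast hx hxl⟩
  let y' : U := ⟨y, mem_strictUpperClosure_of_not_isLeast hy hyl⟩
  have hcount (z : U) : (Iio z).Countable :=
    (Prod.Lex.countable_Iio_s15 OmegaOne.countable_Iio_s15 (z : KrivineX)).preimage Subtype.val_injective
  obtain ⟨e₁⟩ := nonempty_Iio_orderIso_of_countable (hcount x') (hcount y')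
  obtain ⟨e₂⟩ := Prod.Lex.nonempty_Ioi_orderIso OmegaOne.nonempty_Ioi_orderIso
    nonempty_Ioi_orderIso_of_countable x y
  obtain ⟨φ, hφ⟩ := exists_orderIso_apply_eq_of_Iio_of_Ioi e₁
    ((hU.ioiOrderIso x').trans (e₂.trans (hU.ioiOrderIso y').symm))
  obtain ⟨π, hπU, hπ⟩ := hU.exists_orderIso_extend φ
  exact ⟨π, by rw [hπU x', hφ], fun e he => hπ e (hE.notMem_strictUpperClosure_compl he)⟩

theorem orderAut_fixing_initial_segment (E : Set KrivineX) (hE : E.Countable)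
    (hdc : ∀ y e : KrivineX, e ∈ E → y ≤ e → y ∈ E)
    (x y : KrivineX) (hx : x ∉ E) (hy : y ∉ E)
    (hxl : ¬ IsLeast Eᶜ x) (hyl : ¬ IsLeast Eᶜ y) :
    ∃ π : KrivineX ≃o KrivineX, π x = y ∧ ∀ e ∈ E, π e = e :=
  orderAut_fixing_initial_segment_general E hdc x y hx hy hxl hyl
end

section
/- Fix a family of types X_n indexed by n ∈ ℕ, and for S ⊆ ℕ let A_S denote the dependent product Π_{n ∈ S} (ℕ → X_n). Then for all S, T ⊆ ℕ there is a bijection (an equivalence of types) between A_S × A_T and A_{S ∪ T}. -/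
/-!
The equivalence is built one coordinate `n` at a time: if `n` lies in both `S` and `T`, the two
sequences at `n` are interleaved into one along `ℕ ⊕ ℕ ≃ ℕ`; if it lies in just one of them, its
sequence is kept; otherwise both sides are trivial. No choice is made beyond deciding membership.
-/

namespace Equiv

def piSubtypeCurry {α : Type*} (p : α → Prop) (β : α → Type*) :
    (∀ a : Subtype p, β a) ≃ ∀ a, p a → β a where
  toFun f a h := f ⟨a, h⟩
  invFun g a := g a a.2
  left_inv _ := rfl
  right_inv _ := rfl

def arrowProdArrowEquivOrArrow {p q : Prop} [Decidable p] [Decidable q] {Y : Type*}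
    (e : Y × Y ≃ Y) : (p → Y) × (q → Y) ≃ (p ∨ q → Y) :=
  if hp : p then
    have := uniqueProp hp
    have := uniqueProp (Or.inl hp : p ∨ q)
    if hq : q then
      have := uniqueProp hq
      ((funUnique p Y).prodCongr (funUnique q Y)).trans (e.trans (funUnique _ Y).symm)
    else
      have : IsEmpty q := ⟨hq⟩
      ((funUnique p Y).prodCongr (arrowPUnitOfIsEmpty.{1} q Y)).trans
        ((prodPUnit Y).trans (funUnique _ Y).symm)
  else
    have : IsEmpty p := ⟨hp⟩
    if hq : q then
      have := uniqueProp hq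
      have := uniqueProp (Or.inr hq : p ∨ q)
      ((arrowPUnitOfIsEmpty.{1} p Y).prodCongr (funUnique q Y)).trans
        ((punitProd Y).trans (funUnique _ Y).symm)
    else
      have : IsEmpty q := ⟨hq⟩
      have : IsEmpty (p ∨ q) := ⟨fun h => h.elim hp hq⟩
      ((arrowPUnitOfIsEmpty.{1} p Y).prodCongr (arrowPUnitOfIsEmpty.{1} q Y)).trans
        ((prodPUnit _).trans (arrowPUnitOfIsEmpty.{1} _ Y).symm)

end Equiv

theorem prod_equiv_union_of_seq_product (X : ℕ → Type*) (S T : Set ℕ) :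
    Nonempty (((∀ n : S, ℕ → X n) × (∀ n : T, ℕ → X n)) ≃
      (∀ n : ↥(S ∪ T), ℕ → X n)) := by
  classical
  let interleave (n : ℕ) : (ℕ → X n) × (ℕ → X n) ≃ (ℕ → X n) :=
    (Equiv.sumArrowEquivProdArrow ℕ ℕ (X n)).symm.trans
      (Equiv.natSumNatEquivNat.arrowCongr (Equiv.refl _))
  exact ⟨((Equiv.piSubtypeCurry (· ∈ S) _).prodCongr (Equiv.piSubtypeCurry (· ∈ T) _)).trans <|
    (Equiv.arrowProdEquivProdArrow ℕ _ _).symm.trans <|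
      (Equiv.piCongrRight fun n => Equiv.arrowProdArrowEquivOrArrow (interleave n)).trans
        (Equiv.piSubtypeCurry (· ∈ S ∪ T) _).symm⟩
end
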